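/- arXiv:2009.00086 — 2 statements merged into one kernel-verified Lean document; each statement's English description precedes it below -/
import Mathlib

section
/- Let μ be a probability measure on a measurable space Ω, let W, E1, E2 be measurable sets, and let d, q1, q2 be natural numbers with q1 < 2^d and 1 ≤ q2. Suppose μ[W | E2ᶜ] ≤ 1/2, μ(E1) ≤ q1/2^d, μ[W | E2 ∩ E1ᶜ] ≤ 1/q2, and μ[E2 | E1ᶜ] ≤ q2/(2^d − q1), all in the extended nonnegative reals. Then μ(W) ≤ 1/2 + q1/2^d + 1/(2^d − q1). -/
open MeasureTheory ProbabilityTheory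

/-- Concrete probability bound from the proof of Theorem 2 (security of the hash-based
keyless key wrap at difficulty level `d`):
`μ(W) ≤ 1/2 + q1/2^d + 1/(2^d − q1)` in `ℝ≥0∞`. -/
theorem stmt_4 {Ω : Type*} [MeasurableSpace Ω] (μ : Measure Ω) [IsProbabilityMeasure μ]
    (W E1 E2 : Set Ω) (hW : MeasurableSet W) (hE1 : MeasurableSet E1)
    (hE2 : MeasurableSet E2) (d q1 q2 : ℕ) (hq1 : q1 < 2 ^ d) (hq2 : 1 ≤ q2)
    (h1 : μ[W | E2ᶜ] ≤ 1 / 2)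
    (h2 : μ E1 ≤ (q1 : ENNReal) / 2 ^ d)
    (h3 : μ[W | E2 ∩ E1ᶜ] ≤ 1 / (q2 : ENNReal))
    (h4 : μ[E2 | E1ᶜ] ≤ (q2 : ENNReal) / ((2 : ENNReal) ^ d - q1)) :
    μ W ≤ 1 / 2 + (q1 : ENNReal) / 2 ^ d + 1 / ((2 : ENNReal) ^ d - q1) := by
  have hsub : W ⊆ (E2ᶜ ∩ W) ∪ (E1 ∪ ((E2 ∩ E1ᶜ) ∩ W)) := by
    intro ω hω
    by_cases h2' : ω ∈ E2
    · by_cases h1' : ω ∈ E1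
      · exact Or.inr (Or.inl h1')
      · exact Or.inr (Or.inr ⟨⟨h2', h1'⟩, hω⟩)
    · exact Or.inl ⟨h2', hω⟩
  have key : μ W ≤ μ (E2ᶜ ∩ W) + (μ E1 + μ ((E2 ∩ E1ᶜ) ∩ W)) :=
    le_trans (measure_mono hsub)
      (le_trans (measure_union_le _ _) (by gcongr; exact measure_union_le _ _))
  have hA : μ (E2ᶜ ∩ W) ≤ 1 / 2 := by
    rw [← cond_mul_eq_inter hE2.compl W μ]
    calc μ[W|E2ᶜ] * μ E2ᶜ ≤ (1/2) * 1 := by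
          exact mul_le_mul' h1 (le_trans (measure_mono (Set.subset_univ _)) (by simp))
      _ = 1 / 2 := by ring
  have hq2' : (q2 : ENNReal) ≠ 0 := by exact_mod_cast Nat.one_le_iff_ne_zero.mp hq2
  have hC : μ ((E2 ∩ E1ᶜ) ∩ W) ≤ 1 / ((2 : ENNReal) ^ d - q1) := by
    rw [← cond_mul_eq_inter (hE2.inter hE1.compl) W μ]
    have hE2E1 : μ (E2 ∩ E1ᶜ) ≤ (q2 : ENNReal) / ((2 : ENNReal) ^ d - q1) := by
      have : μ (E1ᶜ ∩ E2) = μ[E2|E1ᶜ] * μ E1ᶜ := (cond_mul_eq_inter hE1.compl E2 μ).symm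
      rw [Set.inter_comm, this]
      calc μ[E2|E1ᶜ] * μ E1ᶜ ≤ ((q2 : ENNReal) / ((2 : ENNReal) ^ d - q1)) * 1 :=
            mul_le_mul' h4 (le_trans (measure_mono (Set.subset_univ _)) (by simp))
        _ = (q2 : ENNReal) / ((2 : ENNReal) ^ d - q1) := by ring
    calc μ[W|E2 ∩ E1ᶜ] * μ (E2 ∩ E1ᶜ)
        ≤ (1 / (q2 : ENNReal)) * ((q2 : ENNReal) / ((2 : ENNReal) ^ d - q1)) :=
          mul_le_mul' h3 hE2E1
      _ = 1 / ((2 : ENNReal) ^ d - q1) := by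
          rw [div_eq_mul_inv, div_eq_mul_inv, one_mul, ← mul_assoc,
            ENNReal.inv_mul_cancel hq2' (by simp), one_mul, one_div]
  calc μ W ≤ μ (E2ᶜ ∩ W) + (μ E1 + μ ((E2 ∩ E1ᶜ) ∩ W)) := key
    _ ≤ 1/2 + ((q1 : ENNReal) / 2 ^ d + 1 / ((2 : ENNReal) ^ d - q1)) := by
        gcongr
    _ = 1 / 2 + (q1 : ENNReal) / 2 ^ d + 1 / ((2 : ENNReal) ^ d - q1) := by ring
end

section
/- Let μ be a probability measure on a measurable space Ω, let W, E1, E2 be measurable sets, and let d, q1, q2 be natural numbers with q1 < 2^d and 1 ≤ q2. Suppose μ[W | E2ᶜ] ≤ 1/2, μ(E1) ≤ q1/2^d, μ[W | E2 ∩ E1ᶜ] ≤ 1/q2, and μ[E2 | E1ᶜ] ≤ q2/(2^d − q1), all in the extended nonnegative reals. Then 2·(μ(W)).toReal − 1 ≤ q1/2^(d−1) + 2/(2^d − q1), where d ≥ 1. -/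
/-!
The winning event `W` splits along the bad events `E₁` and `E₂`. Outside `E₂` the adversary
wins with conditional probability at most `1/2`; `E₁` itself has probability at most `q₁/2^d`;
and on `E₂ \ E₁` the chain rule `μ(E₂ ∩ E₁ᶜ ∩ W) ≤ μ[W | E₂ ∩ E₁ᶜ] · μ[E₂ | E₁ᶜ]` gives at most
`(1/q₂) · q₂/(2^d - q₁) = 1/(2^d - q₁)`. Hence `μ W ≤ 1/2 + q₁/2^d + 1/(2^d - q₁)`, and doubling
and subtracting `1` gives the advantage bound.
-/

open MeasureTheory ProbabilityTheory
open scoped ENNReal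

namespace ENNReal

theorem mul_le_one_div_of_le_one_div_of_le_div {a b q n : ℝ≥0∞} (ha : a ≤ 1 / q)
    (hb : b ≤ q / n) : a * b ≤ 1 / n :=
  calc a * b ≤ q⁻¹ * (q * n⁻¹) := by
        simpa only [one_div, div_eq_mul_inv, one_mul] using mul_le_mul' ha hb
    _ = q⁻¹ * q * n⁻¹ := (mul_assoc _ _ _).symm
    _ ≤ 1 * n⁻¹ := by gcongr; exact ENNReal.inv_mul_le_one q
    _ = 1 / n := by rw [one_mul, one_div]

theorem toReal_two_pow_sub_natCast {d q : ℕ} (hq : q ≤ 2 ^ d) :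
    ((2 : ℝ≥0∞) ^ d - q).toReal = (2 : ℝ) ^ d - q := by
  have hq' : (q : ℝ≥0∞) ≤ 2 ^ d := by exact_mod_cast hq
  rw [toReal_sub_of_le hq' (by simp), toReal_pow, toReal_natCast, toReal_ofNat]

end ENNReal

section

variable {Ω : Type*} [MeasurableSpace Ω] {μ : Measure Ω} {s : Set Ω}

theorem measure_inter_le_cond [IsProbabilityMeasure μ] (hs : MeasurableSet s) (t : Set Ω) :
    μ (s ∩ t) ≤ μ[t | s] :=
  (cond_mul_eq_inter hs t μ).symm.trans_le (mul_le_of_le_one_right' prob_le_one)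

theorem measure_le_add_of_three_cases (μ : Measure Ω) (W E₁ E₂ : Set Ω) :
    μ W ≤ μ (E₂ᶜ ∩ W) + μ E₁ + μ (E₂ ∩ E₁ᶜ ∩ W) := by
  have hcover : W ⊆ (E₂ᶜ ∩ W) ∪ E₁ ∪ (E₂ ∩ E₁ᶜ ∩ W) := by
    intro ω hω
    by_cases hω₂ : ω ∈ E₂ <;> by_cases hω₁ : ω ∈ E₁ <;> simp [*]
  calc μ W ≤ μ ((E₂ᶜ ∩ W) ∪ E₁ ∪ (E₂ ∩ E₁ᶜ ∩ W)) := measure_mono hcover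
    _ ≤ _ := (measure_union_le _ _).trans (add_le_add_left (measure_union_le _ _) _)

theorem measure_inter_compl_inter_le [IsProbabilityMeasure μ] {W E₁ E₂ : Set Ω}
    (hE₁ : MeasurableSet E₁) (hE₂ : MeasurableSet E₂) {q n : ℝ≥0∞}
    (hW : μ[W | E₂ ∩ E₁ᶜ] ≤ 1 / q) (hE : μ[E₂ | E₁ᶜ] ≤ q / n) :
    μ (E₂ ∩ E₁ᶜ ∩ W) ≤ 1 / n :=
  calc μ (E₂ ∩ E₁ᶜ ∩ W) = μ[W | E₂ ∩ E₁ᶜ] * μ (E₁ᶜ ∩ E₂) := by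
        rw [Set.inter_comm E₁ᶜ, cond_mul_eq_inter (hE₂.inter hE₁.compl)]
    _ ≤ 1 / n :=
        ENNReal.mul_le_one_div_of_le_one_div_of_le_div hW
          ((measure_inter_le_cond hE₁.compl E₂).trans hE)

end

theorem two_mul_sub_one_le_of_le_half_add {x a b : ℝ} {d : ℕ} (hd : 1 ≤ d)
    (h : x ≤ 1 / 2 + a / 2 ^ d + 1 / b) : 2 * x - 1 ≤ a / 2 ^ (d - 1) + 2 / b := by
  have ha : 2 * (a / 2 ^ d) = a / 2 ^ (d - 1) := by
    obtain ⟨k, rfl⟩ : ∃ k, d = k + 1 := ⟨d - 1, by omega⟩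
    rw [Nat.add_sub_cancel, pow_succ]
    field_simp
  have hb : 2 * (1 / b) = 2 / b := mul_one_div 2 b
  linarith

theorem stmt_5_general {Ω : Type*} [MeasurableSpace Ω] (μ : Measure Ω) [IsProbabilityMeasure μ]
    (W E1 E2 : Set Ω) (hE1 : MeasurableSet E1)
    (hE2 : MeasurableSet E2) (d q1 q2 : ℕ) (hd : 1 ≤ d) (hq1 : q1 < 2 ^ d)
    (h1 : μ[W | E2ᶜ] ≤ 1 / 2)
    (h2 : μ E1 ≤ (q1 : ENNReal) / 2 ^ d)
    (h3 : μ[W | E2 ∩ E1ᶜ] ≤ 1 / (q2 : ENNReal))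
    (h4 : μ[E2 | E1ᶜ] ≤ (q2 : ENNReal) / ((2 : ENNReal) ^ d - q1)) :
    2 * (μ W).toReal - 1 ≤ (q1 : ℝ) / 2 ^ (d - 1) + 2 / ((2 : ℝ) ^ d - q1) := by
  have hbound : μ W ≤ 1 / 2 + (q1 : ℝ≥0∞) / 2 ^ d + 1 / ((2 : ℝ≥0∞) ^ d - q1) :=
    (measure_le_add_of_three_cases μ W E1 E2).trans <| add_le_add
      (add_le_add ((measure_inter_le_cond hE2.compl W).trans h1) h2)
      (measure_inter_compl_inter_le hE1 hE2 h3 h4)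
  have hN : ((2 : ℝ≥0∞) ^ d - q1) ≠ 0 := (tsub_pos_of_lt (by exact_mod_cast hq1)).ne'
  have hreal : (μ W).toReal ≤ 1 / 2 + (q1 : ℝ) / 2 ^ d + 1 / ((2 : ℝ) ^ d - q1) := by
    have := ENNReal.toReal_mono (by simp [ENNReal.div_eq_top, hN]) hbound
    simpa [ENNReal.toReal_add, ENNReal.div_eq_top, hN,
      ENNReal.toReal_two_pow_sub_natCast hq1.le] using this
  exact two_mul_sub_one_le_of_le_half_add hd hreal

/-- Advantage bound concluding the proof of Theorem 2: under the same hypotheses as the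
concrete probability bound, the adversary's advantage satisfies
`2·μ(W).toReal − 1 ≤ q1/2^(d−1) + 2/(2^d − q1)` (with `d ≥ 1`). -/
theorem stmt_5 {Ω : Type*} [MeasurableSpace Ω] (μ : Measure Ω) [IsProbabilityMeasure μ]
    (W E1 E2 : Set Ω) (hW : MeasurableSet W) (hE1 : MeasurableSet E1)
    (hE2 : MeasurableSet E2) (d q1 q2 : ℕ) (hd : 1 ≤ d) (hq1 : q1 < 2 ^ d) (hq2 : 1 ≤ q2)
    (h1 : μ[W | E2ᶜ] ≤ 1 / 2)
    (h2 : μ E1 ≤ (q1 : ENNReal) / 2 ^ d)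
    (h3 : μ[W | E2 ∩ E1ᶜ] ≤ 1 / (q2 : ENNReal))
    (h4 : μ[E2 | E1ᶜ] ≤ (q2 : ENNReal) / ((2 : ENNReal) ^ d - q1)) :
    2 * (μ W).toReal - 1 ≤ (q1 : ℝ) / 2 ^ (d - 1) + 2 / ((2 : ℝ) ^ d - q1) :=
  stmt_5_general μ W E1 E2 hE1 hE2 d q1 q2 hd hq1 h1 h2 h3 h4
end
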